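/- Under the hypotheses of the previous statement, the collection F(q) (constructed from the updated point list q with diameter threshold 3μ and score threshold r/(r+1)) equals ∪_{j ∈ R∖K} F̄_{ℓ_j}. -/

import Mathlib

noncomputable section
open Matrix
open scoped Classical

/-- Entrywise L1 norm of a vector. -/
def l1 {α : Type*} [Fintype α] (v : α → ℝ) : ℝ := ∑ i, |v i|

/-- Induced L1 norm of a matrix (maximum column sum of absolute values). -/
def ml1 {α β : Type*} [Fintype α] [Fintype β] (M : Matrix α β ℝ) : ℝ :=
  sSup (Set.range fun j => ∑ i, |M i j|)

/-- Feasible set of problem P(A,r). -/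
def Feas {ι : Type*} [Fintype ι] [DecidableEq ι] (X : Matrix ι ι ℝ) (r : ℕ) : Prop :=
  Matrix.trace X = (r : ℝ) ∧ (∀ i, X i i ≤ 1) ∧ (∀ i j, 0 ≤ X i j) ∧
    (∀ i j, X i j ≤ X i i)

/-- κ(W) = min over j of min over nonnegative z (supported off j) of
    ‖w_j − W(:,R∖{j}) z‖₁. -/
def kappa {d r : ℕ} (W : Matrix (Fin d) (Fin r) ℝ) : ℝ :=
  sInf {c | ∃ (j : Fin r) (z : Fin r → ℝ), (∀ k, 0 ≤ z k) ∧ z j = 0 ∧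
    c = l1 (fun i => W i j - ∑ k, W i k * z k)}

/-- ω(W) = min over distinct pairs of ‖w_{j₁} − w_{j₂}‖₁. -/
def omegaW {d r : ℕ} (W : Matrix (Fin d) (Fin r) ℝ) : ℝ :=
  sInf {c | ∃ j₁ j₂ : Fin r, j₁ ≠ j₂ ∧ c = l1 (fun i => W i j₁ - W i j₂)}

/-- β = maximum entry of H̄. -/
def betaH {r m : ℕ} (Hb : Matrix (Fin r) (Fin m) ℝ) : ℝ :=
  sSup (Set.range fun p : Fin r × Fin m => Hb p.1 p.2)

/-- L1 distance between columns i and u of A. -/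
def cdist {d : ℕ} {ι : Type*} [Fintype ι] (A : Matrix (Fin d) ι ℝ) (i u : ι) : ℝ :=
  l1 (fun k => A k i - A k u)

/-- Ω_i : the nested family of clusters built from index i by ordering the columns
    of A by L1 distance to a_i (prefixes of such an ordering). -/
def OmegaC {d : ℕ} {ι : Type*} [Fintype ι] (A : Matrix (Fin d) ι ℝ) (i : ι) :
    Set (Finset ι) :=
  {S | i ∈ S ∧ ∀ u ∈ S, ∀ v, v ∉ S → cdist A i u ≤ cdist A i v}

/-- diameter of a cluster S in Ω_i. -/
def diamC {d : ℕ} {ι : Type*} [Fintype ι] (A : Matrix (Fin d) ι ℝ) (i : ι)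
    (S : Finset ι) : ℝ :=
  sSup {x | ∃ u ∈ S, x = cdist A i u}

/-- score of a cluster with respect to a point list. -/
def scoreS {ι : Type*} (S : Finset ι) (p : ι → ℝ) : ℝ := ∑ u ∈ S, p u

/-- F_i(q). -/
def FsetC {d : ℕ} {ι : Type*} [Fintype ι] (A : Matrix (Fin d) ι ℝ) (μ : ℝ) (r : ℕ)
    (q : ι → ℝ) (i : ι) : Set (Finset ι) :=
  {S | S ∈ OmegaC A i ∧ diamC A i S ≤ 3 * μ ∧ (r : ℝ) / (r + 1) < scoreS S q}

/-- G_i(q). -/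
def GsetC {d : ℕ} {ι : Type*} [Fintype ι] (A : Matrix (Fin d) ι ℝ) (r : ℕ)
    (q : ι → ℝ) (i : ι) : Set (Finset ι) :=
  {S | S ∈ OmegaC A i ∧ (r : ℝ) / (r + 1) < scoreS S q}

/-- F̄_j : clusters of F all of whose columns are within 8μ of w_j. -/
def FbarC {d r m : ℕ} (A : Matrix (Fin d) (Fin r ⊕ Fin m) ℝ)
    (W : Matrix (Fin d) (Fin r) ℝ) (μ : ℝ) (q : Fin r ⊕ Fin m → ℝ) (j : Fin r) :
    Set (Finset (Fin r ⊕ Fin m)) :=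
  {S | (∃ i, S ∈ FsetC A μ r q i) ∧ ∀ u ∈ S, l1 (fun k => A k u - W k j) ≤ 8 * μ}

/-!
Comparing with the exact solution of `P(W H, r)` (the rows of `H` placed at the pure columns)
shows that the optimum `X` reconstructs every column of `A` up to `2ε`. For the noisy copy of a
vertex `w_j` this, together with `κ(W)`, puts diagonal mass `p` larger than `r/(r+1)` into the
`2μ`-ball around `w_j`. As `16μ < ω(W)`, the `8μ`-balls around distinct vertices are disjoint,
and `p` has total mass `r`. So a cluster of diameter `≤ 3μ` and score `> r/(r+1)` meets a
`2μ`-ball and lies in the `8μ`-ball of that vertex, which carries mass at most `2r/(r+1)`: next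
to an already extracted cluster, on which `q` vanishes, its `q`-score drops to `≤ r/(r+1)`.
Conversely, a cluster around a fresh vertex avoids all extracted clusters, and there `q = p`.
-/

section L1

variable {α β : Type*} [Fintype α] [Fintype β]

lemma l1_nonneg (v : α → ℝ) : 0 ≤ l1 v :=
  Finset.sum_nonneg fun _ _ => abs_nonneg _

lemma l1_of_nonneg {v : α → ℝ} (hv : ∀ i, 0 ≤ v i) : l1 v = ∑ i, v i :=
  Finset.sum_congr rfl fun i _ => abs_of_nonneg (hv i)

lemma abs_sum_le_l1 (v : α → ℝ) : |∑ i, v i| ≤ l1 v :=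
  Finset.abs_sum_le_sum_abs _ _

lemma l1_add_le (f g : α → ℝ) : l1 (fun i => f i + g i) ≤ l1 f + l1 g := by
  rw [l1, l1, l1, ← Finset.sum_add_distrib]
  exact Finset.sum_le_sum fun i _ => abs_add_le _ _

lemma l1_sub_le (f g : α → ℝ) : l1 (fun i => f i - g i) ≤ l1 f + l1 g := by
  rw [l1, l1, l1, ← Finset.sum_add_distrib]
  exact Finset.sum_le_sum fun i _ => abs_sub _ _

lemma l1_sub_triangle (f g h : α → ℝ) :
    l1 (fun i => f i - h i) ≤ l1 (fun i => f i - g i) + l1 (fun i => g i - h i) := by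
  simpa using l1_add_le (fun i => f i - g i) (fun i => g i - h i)

lemma l1_sub_comm (f g : α → ℝ) : l1 (fun i => f i - g i) = l1 (fun i => g i - f i) :=
  Finset.sum_congr rfl fun _ _ => abs_sub_comm _ _

lemma l1_mul (t : ℝ) (v : α → ℝ) : l1 (fun i => t * v i) = |t| * l1 v := by
  simp only [l1, abs_mul, Finset.mul_sum]

lemma l1_mulVec_le (M : Matrix β α ℝ) {C : ℝ} (hM : ∀ j, l1 (fun i => M i j) ≤ C)
    (v : α → ℝ) : l1 (M *ᵥ v) ≤ C * l1 v := by
  calc l1 (M *ᵥ v) ≤ ∑ i, ∑ j, |M i j| * |v j| := by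
        refine Finset.sum_le_sum fun i _ => (Finset.abs_sum_le_sum_abs _ _).trans_eq ?_
        simp only [abs_mul]
    _ = ∑ j, l1 (fun i => M i j) * |v j| := by
        rw [Finset.sum_comm]; simp only [l1, Finset.sum_mul]
    _ ≤ ∑ j, C * |v j| := by gcongr with j; exact hM j
    _ = C * l1 v := by rw [l1, Finset.mul_sum]

lemma sum_mulVec_of_sum_col_eq_one (M : Matrix β α ℝ) (hM : ∀ j, ∑ i, M i j = 1)
    (v : α → ℝ) : ∑ i, (M *ᵥ v) i = ∑ j, v j := by
  simp only [Matrix.mulVec, dotProduct]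
  rw [Finset.sum_comm]
  simp only [← Finset.sum_mul, hM, one_mul]

lemma col_l1_le_ml1 (M : Matrix α β ℝ) (j : β) : l1 (fun i => M i j) ≤ ml1 M :=
  le_csSup (Set.finite_range _).bddAbove (Set.mem_range_self j)

lemma ml1_le {M : Matrix α β ℝ} {C : ℝ} (hM : ∀ j, l1 (fun i => M i j) ≤ C) (hC : 0 ≤ C) :
    ml1 M ≤ C :=
  Real.sSup_le (by rintro _ ⟨j, rfl⟩; exact hM j) hC

end L1

lemma col_le_one {α β : Type*} [Fintype β] {H : Matrix β α ℝ} (hH : ∀ j u, 0 ≤ H j u)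
    (hHsum : ∀ u, ∑ j, H j u = 1) (j : β) (u : α) : H j u ≤ 1 :=
  hHsum u ▸ Finset.single_le_sum (fun k _ => hH k u) (Finset.mem_univ j)

lemma l1_mulVec_sub_col_le {d r : ℕ} {W : Matrix (Fin d) (Fin r) ℝ}
    (hWcol : ∀ j, l1 (fun i => W i j) = 1) {h : Fin r → ℝ} (h0 : ∀ j, 0 ≤ h j)
    (h1 : ∑ j, h j = 1) (j : Fin r) :
    l1 (fun i => (W *ᵥ h) i - W i j) ≤ 2 * (1 - h j) := by
  have hsplit : (fun i => (W *ᵥ h) i - W i j) = W *ᵥ (h - Pi.single j 1) := by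
    rw [Matrix.mulVec_sub, Matrix.mulVec_single_one]; rfl
  have hhj : h j ≤ 1 := h1 ▸ Finset.single_le_sum (fun j _ => h0 j) (Finset.mem_univ j)
  have hdist : l1 (h - Pi.single j 1) = 2 * (1 - h j) := by
    rw [l1, ← Finset.add_sum_erase _ _ (Finset.mem_univ j),
      Finset.sum_congr rfl fun j' hj' => by
        rw [Pi.sub_apply, Pi.single_eq_of_ne (Finset.ne_of_mem_erase hj'), sub_zero,
          abs_of_nonneg (h0 j')],
      Finset.sum_erase_eq_sub (Finset.mem_univ j), h1]
    rw [Pi.sub_apply, Pi.single_eq_same, abs_of_nonpos (by linarith)]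
    ring
  rw [hsplit, ← hdist]
  simpa using l1_mulVec_le W (fun j => (hWcol j).le) (h - Pi.single j 1)

section KappaOmega

variable {d r : ℕ} {W : Matrix (Fin d) (Fin r) ℝ}

lemma kappa_le (j : Fin r) {z : Fin r → ℝ} (hz : ∀ k, 0 ≤ z k) (hzj : z j = 0) :
    kappa W ≤ l1 (fun i => W i j - ∑ k, W i k * z k) :=
  csInf_le ⟨0, by rintro c ⟨j, z, -, -, rfl⟩; exact l1_nonneg _⟩ ⟨j, z, hz, hzj, rfl⟩

lemma omegaW_le {j₁ j₂ : Fin r} (h : j₁ ≠ j₂) :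
    omegaW W ≤ l1 (fun i => W i j₁ - W i j₂) :=
  csInf_le ⟨0, by rintro c ⟨j₁, j₂, -, rfl⟩; exact l1_nonneg _⟩ ⟨j₁, j₂, h, rfl⟩

lemma kappa_le_one (hWcol : ∀ j, l1 (fun i => W i j) = 1) : kappa W ≤ 1 := by
  rcases isEmpty_or_nonempty (Fin r) with hr | ⟨⟨j⟩⟩
  · simp [kappa, Set.eq_empty_of_isEmpty, Real.sInf_empty]
  · simpa [hWcol j] using kappa_le (W := W) j (z := 0) (fun _ => le_rfl) rfl

lemma omegaW_le_two (hWcol : ∀ j, l1 (fun i => W i j) = 1) : omegaW W ≤ 2 := by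
  by_cases h : ∃ j₁ j₂ : Fin r, j₁ ≠ j₂
  · obtain ⟨j₁, j₂, hne⟩ := h
    calc omegaW W ≤ l1 (fun i => W i j₁ - W i j₂) := omegaW_le hne
      _ ≤ 2 := by linarith [l1_sub_le (fun i => W i j₁) (fun i => W i j₂), hWcol j₁, hWcol j₂]
  · push Not at h
    have : {c | ∃ j₁ j₂ : Fin r, j₁ ≠ j₂ ∧ c = l1 (fun i => W i j₁ - W i j₂)} = ∅ :=
      Set.eq_empty_of_forall_notMem fun c ⟨j₁, j₂, hne, _⟩ => hne (h j₁ j₂)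
    rw [omegaW, this, Real.sInf_empty]
    norm_num

lemma kappa_le_omegaW {j₁ j₂ : Fin r} (h : j₁ ≠ j₂) : kappa W ≤ omegaW W := by
  refine le_csInf ⟨_, j₁, j₂, h, rfl⟩ ?_
  rintro _ ⟨k₁, k₂, hk, rfl⟩
  simpa [Pi.single_apply, hk] using
    kappa_le (W := W) k₁ (z := Pi.single k₂ 1) (fun k => by simp [Pi.single_apply]; positivity)
      (by simp [hk])

lemma kappa_mul_le_l1 (j : Fin r) {y : Fin r → ℝ} (hy : ∀ k, 0 ≤ y k) :
    kappa W * (1 - y j) ≤ l1 (fun i => W i j - (W *ᵥ y) i) := by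
  rcases le_or_gt 1 (y j) with hyj | hyj
  · have hκ : 0 ≤ kappa W := Real.sInf_nonneg (by rintro c ⟨j, z, -, -, rfl⟩; exact l1_nonneg _)
    exact (mul_nonpos_of_nonneg_of_nonpos hκ (by linarith)).trans (l1_nonneg _)
  have ht : 0 < 1 - y j := by linarith
  -- the off-`j` part of `y`, rescaled by `1 / (1 - y j)`, competes in the definition of `κ(W)`
  set z : Fin r → ℝ := fun k => if k = j then 0 else y k / (1 - y j)
  have hz : ∀ k, 0 ≤ z k := fun k => by
    simp only [z]; split_ifs
    exacts [le_rfl, div_nonneg (hy k) ht.le]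
  have hrescale : ∀ i, W i j - (W *ᵥ y) i = (1 - y j) * (W i j - ∑ k, W i k * z k) := by
    intro i
    have hterm : ∀ k, (1 - y j) * (W i k * z k) =
        W i k * y k - if k = j then W i k * y k else 0 := by
      intro k
      simp only [z]
      split_ifs with hk
      · simp
      · field_simp; ring
    rw [mul_sub, Finset.mul_sum, Finset.sum_congr rfl fun k _ => hterm k,
      Finset.sum_sub_distrib, Finset.sum_ite_eq']
    simp only [Finset.mem_univ, if_true, Matrix.mulVec, dotProduct]
    ring
  rw [funext hrescale, l1_mul, abs_of_pos ht, mul_comm]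
  exact mul_le_mul_of_nonneg_left (kappa_le j hz (by simp [z])) ht.le

end KappaOmega

/-- The two admissible choices of the radius `μ` for the noise level `ε`, in terms of
`κ = κ(W)`, `ω = ω(W)` and `R = r + 1`. -/
def MuAdmissible (κ ω ε μ R : ℝ) : Prop :=
  (ε < κ * ω / (578 * R) ∧ ∃ ξ : ℝ, 0 < ξ ∧ ξ < κ / 35 ∧ μ = 17 * R * ε / κ + ξ) ∨
    (ε < κ ^ 2 / (289 * R ^ 2) ∧ ∃ ξ : ℝ, 0 < ξ ∧ ξ < κ / 35 ∧ μ = Real.sqrt ε + ξ)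

lemma sqrt_lt_div_of_lt_sq_div {κ ε R : ℝ} (hR : 0 < R) (hκ : 0 < κ)
    (hε : ε < κ ^ 2 / (289 * R ^ 2)) : Real.sqrt ε < κ / (17 * R) :=
  (Real.sqrt_lt' (by positivity)).2 (by convert hε using 1; field_simp; ring)

namespace MuAdmissible

variable {κ ω ε μ R : ℝ}

lemma kappa_pos (h : MuAdmissible κ ω ε μ R) : 0 < κ := by
  rcases h with ⟨-, ξ, hξ, hξκ, -⟩ | ⟨-, ξ, hξ, hξκ, -⟩ <;> linarith

lemma mu_pos (h : MuAdmissible κ ω ε μ R) (hε : 0 ≤ ε) (hR : 0 < R) : 0 < μ := by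
  have hκ := h.kappa_pos
  rcases h with ⟨-, ξ, hξ, -, rfl⟩ | ⟨-, ξ, hξ, -, rfl⟩ <;> positivity

lemma noise_le (h : MuAdmissible κ ω ε μ R) (hε : 0 ≤ ε) (hR : 0 < R) :
    17 * R * ε ≤ κ * μ := by
  have hκ := h.kappa_pos
  rcases h with ⟨-, ξ, hξ, -, rfl⟩ | ⟨hεκ, ξ, hξ, -, rfl⟩
  · rw [mul_add, mul_div_cancel₀ _ hκ.ne']
    nlinarith
  · have hs := sqrt_lt_div_of_lt_sq_div hR hκ hεκ
    have hs' : 17 * R * Real.sqrt ε ≤ κ := by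
      rw [lt_div_iff₀ (by positivity)] at hs; linarith
    calc 17 * R * ε = 17 * R * Real.sqrt ε * Real.sqrt ε := by
          rw [mul_assoc _ (Real.sqrt ε), Real.mul_self_sqrt hε]
      _ ≤ κ * Real.sqrt ε := mul_le_mul_of_nonneg_right hs' (Real.sqrt_nonneg ε)
      _ ≤ κ * (Real.sqrt ε + ξ) := by gcongr; linarith

lemma noise_lt (h : MuAdmissible κ ω ε μ R) (hR : 1 ≤ R) (hκ1 : κ ≤ 1) (hω2 : ω ≤ 2) :
    R * ε < 1 / 289 := by
  have hκ := h.kappa_pos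
  rcases h with ⟨hεκ, -⟩ | ⟨hεκ, -⟩ <;>
  · rw [lt_div_iff₀ (by positivity)] at hεκ
    nlinarith

lemma sixteen_mul_lt (h : MuAdmissible κ ω ε μ R) (hR : 2 ≤ R) (hκω : κ ≤ ω) :
    16 * μ < ω := by
  have hκ := h.kappa_pos
  rcases h with ⟨hεκ, ξ, -, hξ, rfl⟩ | ⟨hεκ, ξ, -, hξ, rfl⟩
  · have : 17 * R * ε / κ < ω / 34 := by
      rw [div_lt_div_iff₀ hκ (by norm_num)]
      rw [lt_div_iff₀ (by positivity)] at hεκ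
      linarith
    linarith
  · have hs := sqrt_lt_div_of_lt_sq_div (by linarith) hκ hεκ
    have : κ / (17 * R) ≤ κ / 34 := by gcongr; linarith
    linarith

end MuAdmissible

lemma div_le_of_mass_bounds {r ε δ s y t c κ μ : ℝ} (hr : 0 ≤ r) (hε : 0 ≤ ε)
    (hδ : δ ≤ 3 * ε + ε * s) (hs : |1 - s| ≤ δ) (hy : κ * (1 - y) ≤ δ)
    (hyc : y + μ / 2 * c ≤ s) (hts : t + c = s)
    (hκ : 0 < κ) (hκ1 : κ ≤ 1) (hμ : 0 < μ)
    (hκμ : 17 * (r + 1) * ε ≤ κ * μ) (hrε : (r + 1) * ε < 1 / 289) :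
    r / (r + 1) ≤ t := by
  obtain ⟨hs₁, hs₂⟩ := abs_le.1 hs
  -- the total weight `s` is at most `51/50`, so `δ ≤ 201/50 ε`, and the far weight `c` is then
  -- at most `(804/850) / (r+1)`, leaving room for the loss `201/50 ε < 0.014 / (r+1)`
  have hε' : ε < 1 / 289 := by nlinarith [mul_nonneg hr hε]
  have hs_le : s ≤ 51 / 50 := by nlinarith
  have hδ' : δ ≤ 201 / 50 * ε := by nlinarith
  have hc₁ : κ * μ * c ≤ 804 / 50 * ε := by nlinarith
  have hc₂ : (r + 1) * c ≤ 804 / 850 := by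
    refine le_of_mul_le_mul_right ?_ (mul_pos hκ hμ)
    nlinarith
  rw [div_le_iff₀ (by positivity)]
  nlinarith

def vertexBall {d r : ℕ} {ι : Type*} [Fintype ι] (A : Matrix (Fin d) ι ℝ)
    (W : Matrix (Fin d) (Fin r) ℝ) (j : Fin r) (ρ : ℝ) : Finset ι :=
  {u | l1 (fun k => A k u - W k j) ≤ ρ}

lemma mem_vertexBall {d r : ℕ} {ι : Type*} [Fintype ι] {A : Matrix (Fin d) ι ℝ}
    {W : Matrix (Fin d) (Fin r) ℝ} {j : Fin r} {ρ : ℝ} {u : ι} :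
    u ∈ vertexBall A W j ρ ↔ l1 (fun k => A k u - W k j) ≤ ρ := by
  simp [vertexBall]

section NoisyFactorization

variable {d r : ℕ} {ι : Type*} {W : Matrix (Fin d) (Fin r) ℝ}
  {H : Matrix (Fin r) ι ℝ} {N A : Matrix (Fin d) ι ℝ} {ε : ℝ}

lemma l1_col_sub_col_le (hWcol : ∀ j, l1 (fun i => W i j) = 1) (hH : ∀ j u, 0 ≤ H j u)
    (hHsum : ∀ u, ∑ j, H j u = 1) (hN : ∀ u, l1 (fun i => N i u) ≤ ε) (hA : A = W * H + N)
    (u : ι) (j : Fin r) : l1 (fun i => A i u - W i j) ≤ 2 * (1 - H j u) + ε := by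
  have hcol : (fun i => A i u - W i j) =
      fun i => ((W *ᵥ fun j => H j u) i - W i j) + N i u := by
    ext i; simp only [hA, Matrix.add_apply, Matrix.mul_apply, Matrix.mulVec, dotProduct]; ring
  rw [hcol]
  linarith [l1_add_le (fun i => (W *ᵥ fun j => H j u) i - W i j) (fun i => N i u),
    l1_mulVec_sub_col_le hWcol (fun j => hH j u) (hHsum u) j, hN u]

/-- `κ(W)` forces the weight `(H x)_j` near `1`, while every column of `A` farther than `2μ`
from `w_j` has `H j s ≤ 1 - μ/2`. -/
lemma div_le_sum_vertexBall [Fintype ι] (hW : ∀ i j, 0 ≤ W i j)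
    (hWcol : ∀ j, l1 (fun i => W i j) = 1) (hH : ∀ j u, 0 ≤ H j u) (hHsum : ∀ u, ∑ j, H j u = 1)
    (hN : ∀ u, l1 (fun i => N i u) ≤ ε) (hA : A = W * H + N) (hε : 0 ≤ ε)
    {μ : ℝ} (hκ : 0 < kappa W) (hμ : 0 < μ) (hκμ : 17 * (r + 1) * ε ≤ kappa W * μ)
    (hrε : (r + 1) * ε < 1 / 289) {u : ι} {j : Fin r} (hu : ∀ i, A i u = W i j + N i u)
    {x : ι → ℝ} (hx : ∀ s, 0 ≤ x s) (hres : l1 (fun i => A i u - (A *ᵥ x) i) ≤ 2 * ε) :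
    (r : ℝ) / (r + 1) ≤ ∑ s ∈ vertexBall A W j (2 * μ), x s := by
  set y := H *ᵥ x
  set T := vertexBall A W j (2 * μ)
  have hκ1 := kappa_le_one hWcol
  have hy0 : ∀ k, 0 ≤ y k := fun k => Finset.sum_nonneg fun s _ => mul_nonneg (hH k s) (hx s)
  have hWsum : ∀ k, ∑ i, W i k = 1 := fun k => (l1_of_nonneg (hW · k)).symm.trans (hWcol k)
  have hAx : A *ᵥ x = W *ᵥ y + N *ᵥ x := by rw [hA, Matrix.add_mulVec, Matrix.mulVec_mulVec]
  have hNx : l1 (N *ᵥ x) ≤ ε * ∑ s, x s := by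
    simpa [l1_of_nonneg hx] using l1_mulVec_le N hN x
  have hδ : l1 (fun i => W i j - (W *ᵥ y) i) ≤ 3 * ε + ε * ∑ s, x s := by
    have hsplit : (fun i => W i j - (W *ᵥ y) i) =
        fun i => (A i u - (A *ᵥ x) i - N i u) + (N *ᵥ x) i := by
      ext i; rw [hu, hAx]; simp only [Pi.add_apply]; ring
    rw [hsplit]
    linarith [l1_add_le (fun i => A i u - (A *ᵥ x) i - N i u) (N *ᵥ x),
      l1_sub_le (fun i => A i u - (A *ᵥ x) i) (fun i => N i u), hN u]
  have hs : |1 - ∑ s, x s| ≤ l1 (fun i => W i j - (W *ᵥ y) i) := by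
    rw [← hWsum j, ← sum_mulVec_of_sum_col_eq_one H hHsum x,
      ← sum_mulVec_of_sum_col_eq_one W hWsum y, ← Finset.sum_sub_distrib]
    exact abs_sum_le_l1 _
  have hyc : y j + μ / 2 * ∑ s ∈ Tᶜ, x s ≤ ∑ s, x s := by
    have hfar : ∀ s ∈ Tᶜ, H j s ≤ 1 - μ / 2 := fun s hs => by
      have hsT : 2 * μ < l1 (fun i => A i s - W i j) := by
        simpa [T, mem_vertexBall] using hs
      have : ε ≤ μ := by nlinarith [mul_le_of_le_one_left hμ.le hκ1]
      linarith [l1_col_sub_col_le hWcol hH hHsum hN hA s j]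
    have hyT : y j = ∑ s ∈ T, H j s * x s + ∑ s ∈ Tᶜ, H j s * x s :=
      (Finset.sum_add_sum_compl T _).symm
    rw [← Finset.sum_add_sum_compl T x, hyT, Finset.mul_sum]
    have h₁ : ∑ s ∈ T, H j s * x s ≤ ∑ s ∈ T, x s :=
      Finset.sum_le_sum fun s _ => mul_le_of_le_one_left (hx s) (col_le_one hH hHsum j s)
    have h₂ : ∑ s ∈ Tᶜ, H j s * x s + ∑ s ∈ Tᶜ, μ / 2 * x s ≤ ∑ s ∈ Tᶜ, x s := by
      rw [← Finset.sum_add_distrib]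
      refine Finset.sum_le_sum fun s hs => ?_
      nlinarith [hfar s hs, hx s]
    linarith
  exact div_le_of_mass_bounds (Nat.cast_nonneg r) hε hδ hs (kappa_mul_le_l1 j hy0) hyc
    (Finset.sum_add_sum_compl T x) hκ hκ1 hμ hκμ hrε

end NoisyFactorization

section Separable

variable {d r m : ℕ} {σ : Equiv.Perm (Fin r ⊕ Fin m)} {Hbar : Matrix (Fin r) (Fin m) ℝ}
  {H : Matrix (Fin r) (Fin r ⊕ Fin m) ℝ}

lemma nonneg_of_fromCols (hH : H = fun j u => Matrix.fromCols 1 Hbar j (σ u))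
    (hHbar : ∀ i j, 0 ≤ Hbar i j) (j : Fin r) (u : Fin r ⊕ Fin m) : 0 ≤ H j u := by
  subst hH
  show 0 ≤ Matrix.fromCols 1 Hbar j (σ u)
  rcases σ u with j' | t
  · simp only [Matrix.fromCols_apply_inl, Matrix.one_apply]; positivity
  · exact hHbar j t

/-- The exact solution of `P(W H, r)` against which the optimum is compared. -/
def selfExpr (σ : Equiv.Perm (Fin r ⊕ Fin m)) (H : Matrix (Fin r) (Fin r ⊕ Fin m) ℝ) :
    Matrix (Fin r ⊕ Fin m) (Fin r ⊕ Fin m) ℝ :=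
  (Matrix.fromRows H 0).submatrix σ id

lemma mul_selfExpr (hH : H = fun j u => Matrix.fromCols 1 Hbar j (σ u))
    (G : Matrix (Fin r) (Fin r ⊕ Fin m) ℝ) : H * selfExpr σ G = G := by
  have : H = (Matrix.fromCols 1 Hbar).submatrix id σ := hH
  rw [this, selfExpr, Matrix.submatrix_mul_equiv, Matrix.fromCols_mul_fromRows]
  simp

lemma sum_selfExpr (G : Matrix (Fin r) (Fin r ⊕ Fin m) ℝ) (u : Fin r ⊕ Fin m) :
    ∑ s, selfExpr σ G s u = ∑ j, G j u := by
  rw [← σ.symm.sum_comp, Fintype.sum_sum_type]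
  simp [selfExpr]

lemma feas_selfExpr (hH : H = fun j u => Matrix.fromCols 1 Hbar j (σ u))
    (hH0 : ∀ j u, 0 ≤ H j u) (hH1 : ∀ j u, H j u ≤ 1) : Feas (selfExpr σ H) r := by
  have hdiag : ∀ j, H j (σ.symm (Sum.inl j)) = 1 := by simp [hH]
  refine ⟨?_, fun s => ?_, fun s u => ?_, fun s u => ?_⟩
  · rw [Matrix.trace, ← σ.symm.sum_comp, Fintype.sum_sum_type]
    simp [selfExpr, hdiag]
  all_goals
    rcases hs : σ s with j | t
    · obtain rfl : s = σ.symm (Sum.inl j) := by simp [← hs]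
      simp [selfExpr, hdiag, hH0, hH1]
    · simp [selfExpr, hs]

end Separable

lemma ml1_sub_mul_le {d r : ℕ} {ι : Type*} [Fintype ι] {W : Matrix (Fin d) (Fin r) ℝ}
    {H : Matrix (Fin r) ι ℝ} {N A : Matrix (Fin d) ι ℝ} {ε : ℝ} {X : Matrix ι ι ℝ}
    (hX0 : ∀ s u, 0 ≤ X s u) (hXsum : ∀ u, ∑ s, X s u = 1) (hHX : H * X = H)
    (hN : ∀ u, l1 (fun i => N i u) ≤ ε) (hA : A = W * H + N) (hε : 0 ≤ ε) :
    ml1 (A - A * X) ≤ 2 * ε := by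
  have hres : A - A * X = N - N * X := by
    rw [hA, Matrix.add_mul, Matrix.mul_assoc, hHX]; abel
  refine ml1_le (fun u => ?_) (by positivity)
  have hNX : l1 (N *ᵥ fun s => X s u) ≤ ε * 1 := by
    simpa [l1_of_nonneg (hX0 · u), hXsum u] using l1_mulVec_le N hN (fun s => X s u)
  rw [hres]
  change l1 (fun i => N i u - (N *ᵥ fun s => X s u) i) ≤ _
  linarith [l1_sub_le (fun i => N i u) (N *ᵥ fun s => X s u), hN u]

lemma sum_add_sum_biUnion_le {ι κ : Type*} [Fintype ι] {p : ι → ℝ} (hp : ∀ u, 0 ≤ p u)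
    {S : Finset ι} {J : Finset κ} {T : κ → Finset ι} (hT : (J : Set κ).PairwiseDisjoint T)
    (hST : ∀ j ∈ J, Disjoint S (T j)) :
    ∑ u ∈ S, p u + ∑ j ∈ J, ∑ u ∈ T j, p u ≤ ∑ u, p u := by
  rw [← Finset.sum_biUnion hT,
    ← Finset.sum_union ((Finset.disjoint_biUnion_right _ _ _).2 hST)]
  exact Finset.sum_le_univ_sum_of_nonneg hp

lemma cdist_le_diamC {d : ℕ} {ι : Type*} [Fintype ι] (A : Matrix (Fin d) ι ℝ) (i : ι)
    {S : Finset ι} {u : ι} (hu : u ∈ S) : cdist A i u ≤ diamC A i S := by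
  refine le_csSup ?_ ⟨u, hu, rfl⟩
  refine ((S.finite_toSet.image (cdist A i)).subset ?_).bddAbove
  rintro _ ⟨v, hv, rfl⟩
  exact ⟨v, hv, rfl⟩

lemma sum_add_sum_le_of_subset {ι : Type*} {p q : ι → ℝ} {S C B : Finset ι}
    (hp : ∀ u, 0 ≤ p u) (hqp : ∀ u, q u ≤ p u) (hqC : ∀ u ∈ C, q u = 0) (hSB : S ⊆ B)
    (hCB : C ⊆ B) :
    ∑ u ∈ S, q u + ∑ u ∈ C, p u ≤ ∑ u ∈ B, p u := by
  have hS : ∑ u ∈ S, q u ≤ ∑ u ∈ S, p u - ∑ u ∈ S ∩ C, p u := by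
    have hsplit_q := Finset.sum_filter_add_sum_filter_not S (· ∈ C) q
    have hsplit_p := Finset.sum_filter_add_sum_filter_not S (· ∈ C) p
    rw [Finset.filter_mem_eq_inter] at hsplit_q hsplit_p
    have hout : ∑ u ∈ S with u ∉ C, q u ≤ ∑ u ∈ S with u ∉ C, p u :=
      Finset.sum_le_sum fun u _ => hqp u
    have hin : ∑ u ∈ S ∩ C, q u = 0 :=
      Finset.sum_eq_zero fun u hu => hqC u (Finset.mem_inter.1 hu).2
    linarith
  have hunion := Finset.sum_union_inter (s₁ := S) (s₂ := C) (f := p)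
  have hB : ∑ u ∈ S ∪ C, p u ≤ ∑ u ∈ B, p u :=
    Finset.sum_le_sum_of_subset_of_nonneg (Finset.union_subset hSB hCB) fun u _ _ => hp u
  linarith

section Clusters

variable {d r : ℕ} {ι : Type*} [Fintype ι] {A : Matrix (Fin d) ι ℝ}
  {W : Matrix (Fin d) (Fin r) ℝ} {μ : ℝ} {p : ι → ℝ}

def VertexSeparated (A : Matrix (Fin d) ι ℝ) (W : Matrix (Fin d) (Fin r) ℝ) (μ : ℝ) : Prop :=
  ∀ u j j', l1 (fun k => A k u - W k j) ≤ 8 * μ → l1 (fun k => A k u - W k j') ≤ 8 * μ → j = j'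

lemma disjoint_vertexBall (hsep : VertexSeparated A W μ) {j j' : Fin r} (hne : j ≠ j')
    {ρ ρ' : ℝ} (hρ : ρ ≤ 8 * μ) (hρ' : ρ' ≤ 8 * μ) :
    Disjoint (vertexBall A W j ρ) (vertexBall A W j' ρ') :=
  Finset.disjoint_left.2 fun u hu hu' =>
    hne (hsep u j j' ((mem_vertexBall.1 hu).trans hρ) ((mem_vertexBall.1 hu').trans hρ'))

lemma sum_le_of_forall_disjoint_vertexBall (hp : ∀ u, 0 ≤ p u) (hpsum : ∑ u, p u = r)
    (hsep : VertexSeparated A W μ) (hμ : 0 ≤ μ)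
    (hmass : ∀ j, (r : ℝ) / (r + 1) ≤ ∑ u ∈ vertexBall A W j (2 * μ), p u) {S : Finset ι}
    (hS : ∀ j, Disjoint S (vertexBall A W j (2 * μ))) :
    ∑ u ∈ S, p u ≤ r / (r + 1) := by
  have hcount := sum_add_sum_biUnion_le hp (J := Finset.univ)
    (fun j _ j' _ hne => disjoint_vertexBall hsep hne (by linarith) (by linarith))
    (fun j _ => hS j)
  have hballs : r * ((r : ℝ) / (r + 1)) ≤ ∑ j, ∑ u ∈ vertexBall A W j (2 * μ), p u := by
    simpa using Finset.sum_le_sum fun j (_ : j ∈ Finset.univ) => hmass j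
  have : (r : ℝ) - r * (r / (r + 1)) = r / (r + 1) := by field_simp; ring
  linarith

lemma sum_vertexBall_le (hp : ∀ u, 0 ≤ p u) (hpsum : ∑ u, p u = r)
    (hsep : VertexSeparated A W μ) (hμ : 0 ≤ μ)
    (hmass : ∀ j, (r : ℝ) / (r + 1) ≤ ∑ u ∈ vertexBall A W j (2 * μ), p u) (j : Fin r) :
    ∑ u ∈ vertexBall A W j (8 * μ), p u ≤ 2 * r / (r + 1) := by
  have hcount := sum_add_sum_biUnion_le hp (S := vertexBall A W j (8 * μ))
    (J := Finset.univ.erase j) (T := fun j => vertexBall A W j (2 * μ))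
    (fun j _ j' _ hne => disjoint_vertexBall hsep hne (by linarith) (by linarith))
    (fun j' hj' => disjoint_vertexBall hsep (Finset.ne_of_mem_erase hj').symm le_rfl
      (by linarith))
  have hballs : (r - 1) * ((r : ℝ) / (r + 1)) ≤
      ∑ j' ∈ Finset.univ.erase j, ∑ u ∈ vertexBall A W j' (2 * μ), p u := by
    have := Finset.sum_le_sum fun j' (_ : j' ∈ Finset.univ.erase j) => hmass j'
    rwa [Finset.sum_const, Finset.card_erase_of_mem (Finset.mem_univ j), Finset.card_univ,
      Fintype.card_fin, nsmul_eq_mul, Nat.cast_pred j.pos] at this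
  have : (r : ℝ) - (r - 1) * (r / (r + 1)) = 2 * r / (r + 1) := by field_simp; ring
  linarith

lemma exists_forall_l1_le_of_mem_FsetC (hp : ∀ u, 0 ≤ p u) (hpsum : ∑ u, p u = r)
    (hsep : VertexSeparated A W μ) (hμ : 0 ≤ μ)
    (hmass : ∀ j, (r : ℝ) / (r + 1) ≤ ∑ u ∈ vertexBall A W j (2 * μ), p u)
    {q : ι → ℝ} (hqp : ∀ u, q u ≤ p u) {S : Finset ι} {i : ι} (hS : S ∈ FsetC A μ r q i) :
    ∃ j, ∀ u ∈ S, l1 (fun k => A k u - W k j) ≤ 8 * μ := by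
  obtain ⟨-, hdiam, hscore⟩ := hS
  have hscore_p : (r : ℝ) / (r + 1) < ∑ u ∈ S, p u :=
    hscore.trans_le (Finset.sum_le_sum fun u _ => hqp u)
  obtain ⟨j, u₀, hu₀S, hu₀⟩ : ∃ j, ∃ u₀ ∈ S, u₀ ∈ vertexBall A W j (2 * μ) := by
    by_contra! h
    exact hscore_p.not_ge (sum_le_of_forall_disjoint_vertexBall hp hpsum hsep hμ hmass
      fun j => Finset.disjoint_left.2 fun u hu => h j u hu)
  refine ⟨j, fun u hu => ?_⟩
  have hui := (cdist_le_diamC A i hu).trans hdiam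
  have hu₀i := (cdist_le_diamC A i hu₀S).trans hdiam
  unfold cdist at hui hu₀i
  linarith [l1_sub_triangle (A · u) (A · i) (W · j), l1_sub_triangle (A · i) (A · u₀) (W · j),
    l1_sub_comm (A · u) (A · i), mem_vertexBall.1 hu₀]

end Clusters

lemma VertexSeparated.of_sixteen_mul_lt {d r : ℕ} {ι : Type*} {A : Matrix (Fin d) ι ℝ}
    {W : Matrix (Fin d) (Fin r) ℝ} {μ : ℝ} (h : ∀ j j' : Fin r, j ≠ j' → 16 * μ < omegaW W) :
    VertexSeparated A W μ := fun u j j' hj hj' => by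
  by_contra hne
  linarith [h j j' hne, omegaW_le (W := W) hne, l1_sub_triangle (W · j) (A · u) (W · j'),
    l1_sub_comm (W · j) (A · u)]

lemma mem_FsetC_iff {d r m : ℕ} {A : Matrix (Fin d) (Fin r ⊕ Fin m) ℝ}
    {W : Matrix (Fin d) (Fin r) ℝ} {μ : ℝ} {p : Fin r ⊕ Fin m → ℝ} (hp : ∀ u, 0 ≤ p u)
    (hpsum : ∑ u, p u = r) (hsep : VertexSeparated A W μ) (hμ : 0 ≤ μ)
    (hmass : ∀ j, (r : ℝ) / (r + 1) ≤ ∑ u ∈ vertexBall A W j (2 * μ), p u)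
    (e : Fin r ≃ Fin r) {k : ℕ} (hk : k ≤ r) {Scl : Fin k → Finset (Fin r ⊕ Fin m)}
    (hScl : ∀ j : Fin k, Scl j ∈ FbarC A W μ p (e (Fin.castLE hk j)))
    {q : Fin r ⊕ Fin m → ℝ} (hq : ∀ u, q u = if ∃ j : Fin k, u ∈ Scl j then 0 else p u)
    (S : Finset (Fin r ⊕ Fin m)) :
    (∃ i, S ∈ FsetC A μ r q i) ↔ ∃ j : Fin r, k ≤ (j : ℕ) ∧ S ∈ FbarC A W μ p (e j) := by
  have hqp : ∀ u, q u ≤ p u := fun u => by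
    rw [hq]; split_ifs
    exacts [hp u, le_rfl]
  constructor
  · rintro ⟨i, hS⟩
    obtain ⟨j₀, hSj₀⟩ := exists_forall_l1_le_of_mem_FsetC hp hpsum hsep hμ hmass hqp hS
    refine ⟨e.symm j₀, ?_, ⟨i, hS.1, hS.2.1, hS.2.2.trans_le (Finset.sum_le_sum fun u _ => hqp u)⟩,
      by simpa using hSj₀⟩
    -- otherwise `S` shares the ball around `w_{j₀}` with an already extracted cluster
    by_contra! hlt
    set j' : Fin k := ⟨e.symm j₀, hlt⟩
    have hj' : e (Fin.castLE hk j') = j₀ := by simp [j', Fin.castLE]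
    obtain ⟨⟨-, -, -, hscore'⟩, hScl₈⟩ := hj' ▸ hScl j'
    have hsum := sum_add_sum_le_of_subset hp hqp (C := Scl j')
      (fun u hu => by rw [hq, if_pos ⟨j', hu⟩])
      (fun u hu => mem_vertexBall.2 (hSj₀ u hu)) (fun u hu => mem_vertexBall.2 (hScl₈ u hu))
    have hball := sum_vertexBall_le hp hpsum hsep hμ hmass j₀
    have : 2 * (r : ℝ) / (r + 1) = r / (r + 1) + r / (r + 1) := by ring
    have hscore : (r : ℝ) / (r + 1) < scoreS S q := hS.2.2
    unfold scoreS at hscore hscore'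
    linarith
  · rintro ⟨j, hkj, ⟨i, hS⟩, hS₈⟩
    refine ⟨i, hS.1, hS.2.1, ?_⟩
    have hqS : ∀ u ∈ S, q u = p u := fun u hu => by
      rw [hq, if_neg]
      rintro ⟨j', hj'⟩
      have := congrArg Fin.val (e.injective (hsep u _ _ ((hScl j').2 u hj') (hS₈ u hu)))
      simp only [Fin.val_castLE] at this
      omega
    rw [scoreS, Finset.sum_congr rfl hqS]
    exact hS.2.2

lemma div_le_sum_diag_vertexBall {d r m : ℕ} {W : Matrix (Fin d) (Fin r) ℝ}
    {Hbar : Matrix (Fin r) (Fin m) ℝ} {σ : Equiv.Perm (Fin r ⊕ Fin m)}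
    {N A : Matrix (Fin d) (Fin r ⊕ Fin m) ℝ} {H : Matrix (Fin r) (Fin r ⊕ Fin m) ℝ} {ε μ : ℝ}
    (hW : ∀ i j, 0 ≤ W i j) (hWcol : ∀ j, l1 (fun i => W i j) = 1)
    (hH : H = fun j u => Matrix.fromCols 1 Hbar j (σ u)) (hH0 : ∀ j u, 0 ≤ H j u)
    (hHsum : ∀ u, ∑ j, H j u = 1) (hN : ∀ u, l1 (fun i => N i u) ≤ ε) (hA : A = W * H + N)
    (hε : 0 ≤ ε) (hκ : 0 < kappa W) (hμ : 0 < μ) (hκμ : 17 * (r + 1) * ε ≤ kappa W * μ)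
    (hrε : (r + 1) * ε < 1 / 289) {X : Matrix (Fin r ⊕ Fin m) (Fin r ⊕ Fin m) ℝ}
    (hX : Feas X r) (hopt : ∀ X' : Matrix (Fin r ⊕ Fin m) (Fin r ⊕ Fin m) ℝ,
      Feas X' r → ml1 (A - A * X) ≤ ml1 (A - A * X'))
    (j : Fin r) :
    (r : ℝ) / (r + 1) ≤ ∑ s ∈ vertexBall A W j (2 * μ), X s s := by
  obtain ⟨-, -, hX0, hXdiag⟩ := hX
  have hfeas := feas_selfExpr hH hH0 (col_le_one hH0 hHsum)
  have hres : ml1 (A - A * X) ≤ 2 * ε :=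
    (hopt _ hfeas).trans <| ml1_sub_mul_le hfeas.2.2.1
      (fun u => (sum_selfExpr H u).trans (hHsum u)) (mul_selfExpr hH H) hN hA hε
  have hu : ∀ i, A i (σ.symm (Sum.inl j)) = W i j + N i (σ.symm (Sum.inl j)) := by
    intro i
    rw [hA, Matrix.add_apply, Matrix.mul_apply]
    simp [hH, Matrix.one_apply]
  refine (div_le_sum_vertexBall hW hWcol hH0 hHsum hN hA hε hκ hμ hκμ hrε hu (hX0 · _)
    ((col_l1_le_ml1 _ _).trans hres)).trans ?_
  exact Finset.sum_le_sum fun s _ => hXdiag s _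

theorem F_of_updated_point_list_general
    {d r m : ℕ} (W : Matrix (Fin d) (Fin r) ℝ) (Hbar : Matrix (Fin r) (Fin m) ℝ)
    (σ : Equiv.Perm (Fin r ⊕ Fin m))
    (N A V : Matrix (Fin d) (Fin r ⊕ Fin m) ℝ)
    (H : Matrix (Fin r) (Fin r ⊕ Fin m) ℝ) (ε : ℝ)
    (hW : ∀ i j, 0 ≤ W i j) (hHbar : ∀ i j, 0 ≤ Hbar i j)
    (hH : H = fun j u => Matrix.fromCols (1 : Matrix (Fin r) (Fin r) ℝ) Hbar j (σ u))
    (hV : V = W * H) (hA : A = V + N)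
    (hWcol : ∀ j, l1 (fun i => W i j) = 1)
    (hHcol : ∀ u, l1 (fun j => H j u) = 1)
    (hε0 : 0 ≤ ε) (hN : ml1 N ≤ ε)
    (Xopt : Matrix (Fin r ⊕ Fin m) (Fin r ⊕ Fin m) ℝ)
    (hfeas : Feas Xopt r)
    (hopt : ∀ X : Matrix (Fin r ⊕ Fin m) (Fin r ⊕ Fin m) ℝ,
      Feas X r → ml1 (A - A * Xopt) ≤ ml1 (A - A * X))
    (μ : ℝ)
    (hcase :
      (ε < kappa W * omegaW W / (578 * (r + 1)) ∧
        ∃ ξ : ℝ, 0 < ξ ∧ ξ < kappa W / 35 ∧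
          μ = 17 * (r + 1) * ε / kappa W + ξ) ∨
      (ε < (kappa W) ^ 2 / (289 * (r + 1) ^ 2) ∧
        ∃ ξ : ℝ, 0 < ξ ∧ ξ < kappa W / 35 ∧ μ = Real.sqrt ε + ξ))
    (p : Fin r ⊕ Fin m → ℝ) (hp : p = fun u => Xopt u u)
    (e : Fin r ≃ Fin r) (k : ℕ) (hk : k < r)
    (Scl : Fin k → Finset (Fin r ⊕ Fin m))
    (hScl : ∀ j : Fin k, Scl j ∈ FbarC A W μ p (e (Fin.castLE hk.le j)))
    (q : Fin r ⊕ Fin m → ℝ)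
    (hq : ∀ u, q u = if ∃ j : Fin k, u ∈ Scl j then 0 else p u) :
    ∀ S : Finset (Fin r ⊕ Fin m),
      (∃ i, S ∈ FsetC A μ r q i) ↔
        ∃ j : Fin r, k ≤ (j : ℕ) ∧ S ∈ FbarC A W μ p (e j) := by
  subst hp
  have hR : (2 : ℝ) ≤ r + 1 := by norm_cast; omega
  have hadm : MuAdmissible (kappa W) (omegaW W) ε μ (r + 1) := hcase
  have hκ := hadm.kappa_pos
  have hμ := hadm.mu_pos hε0 (by linarith)
  have hH0 := nonneg_of_fromCols hH hHbar
  have hsep : VertexSeparated A W μ := .of_sixteen_mul_lt fun j j' hne =>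
    hadm.sixteen_mul_lt hR (kappa_le_omegaW hne)
  have hmass := div_le_sum_diag_vertexBall hW hWcol hH hH0
    (fun u => (l1_of_nonneg (hH0 · u)).symm.trans (hHcol u))
    (fun u => (col_l1_le_ml1 N u).trans hN) (by rw [hA, hV]) hε0 hκ hμ
    (hadm.noise_le hε0 (by linarith))
    (hadm.noise_lt (by linarith) (kappa_le_one hWcol) (omegaW_le_two hWcol)) hfeas hopt
  exact mem_FsetC_iff (fun u => hfeas.2.2.1 u u) hfeas.1 hsep hμ.le hmass e hk.le hScl hq

/-- F(q) = ∪_{j ∈ R∖K} F̄_{ℓ_j}. -/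
theorem F_of_updated_point_list
    {d r m : ℕ} (W : Matrix (Fin d) (Fin r) ℝ) (Hbar : Matrix (Fin r) (Fin m) ℝ)
    (σ : Equiv.Perm (Fin r ⊕ Fin m))
    (N A V : Matrix (Fin d) (Fin r ⊕ Fin m) ℝ)
    (H : Matrix (Fin r) (Fin r ⊕ Fin m) ℝ) (ε : ℝ)
    (hW : ∀ i j, 0 ≤ W i j) (hHbar : ∀ i j, 0 ≤ Hbar i j)
    (hH : H = fun j u => Matrix.fromCols (1 : Matrix (Fin r) (Fin r) ℝ) Hbar j (σ u))
    (hV : V = W * H) (hA : A = V + N)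
    (hVcol : ∀ u, l1 (fun i => V i u) = 1)
    (hWcol : ∀ j, l1 (fun i => W i j) = 1)
    (hHcol : ∀ u, l1 (fun j => H j u) = 1)
    (hε0 : 0 ≤ ε) (hN : ml1 N ≤ ε)
    (Xopt : Matrix (Fin r ⊕ Fin m) (Fin r ⊕ Fin m) ℝ)
    (hfeas : Feas Xopt r)
    (hopt : ∀ X : Matrix (Fin r ⊕ Fin m) (Fin r ⊕ Fin m) ℝ,
      Feas X r → ml1 (A - A * Xopt) ≤ ml1 (A - A * X))
    (μ : ℝ)
    (hcase :
      (ε < kappa W * omegaW W / (578 * (r + 1)) ∧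
        ∃ ξ : ℝ, 0 < ξ ∧ ξ < kappa W / 35 ∧
          μ = 17 * (r + 1) * ε / kappa W + ξ) ∨
      (ε < (kappa W) ^ 2 / (289 * (r + 1) ^ 2) ∧
        ∃ ξ : ℝ, 0 < ξ ∧ ξ < kappa W / 35 ∧ μ = Real.sqrt ε + ξ))
    (p : Fin r ⊕ Fin m → ℝ) (hp : p = fun u => Xopt u u)
    (e : Fin r ≃ Fin r) (k : ℕ) (hk : k < r)
    (Scl : Fin k → Finset (Fin r ⊕ Fin m))
    (hScl : ∀ j : Fin k, Scl j ∈ FbarC A W μ p (e (Fin.castLE hk.le j)))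
    (q : Fin r ⊕ Fin m → ℝ)
    (hq : ∀ u, q u = if ∃ j : Fin k, u ∈ Scl j then 0 else p u) :
    ∀ S : Finset (Fin r ⊕ Fin m),
      (∃ i, S ∈ FsetC A μ r q i) ↔
        ∃ j : Fin r, k ≤ (j : ℕ) ∧ S ∈ FbarC A W μ p (e j) :=
  F_of_updated_point_list_general W Hbar σ N A V H ε hW hHbar hH hV hA hWcol hHcol hε0 hN Xopt hfeas
    hopt μ hcase p hp e k hk Scl hScl q hq
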